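/- Let A > 0, let z, z̄ ∈ ℝ with z < z̄, and let σ : ℝ → (0, ∞) satisfy |σ(z̄) − σ(z)| > (z̄ − z)/A. Let ξ be a real-valued random variable with P(|ξ| ≤ A) = 1 and 0 < P(ξ ≤ a) < 1 for every a ∈ (−A, A). Set Y = z + σ(z)·ξ and Ȳ = z̄ + σ(z̄)·ξ. Then the laws of Y and Ȳ are not comparable in first order stochastic dominance: there exist a*, a_* ∈ ℝ such that P(Ȳ ≤ a*) < P(Y ≤ a*) and P(Y ≤ a_*) < P(Ȳ ≤ a_*). -/

import Mathlib

/-!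
The law of `c + s ξ` (with `s > 0`) is carried by `[c - s A, c + s A]`, and its CDF is
strictly between `0` and `1` on the interior. The non-Lipschitz bound says that one of the
intervals `[z - σ(z) A, z + σ(z) A]`, `[z̄ - σ(z̄) A, z̄ + σ(z̄) A]` sticks out of the other at
both ends. At the right end of the inner interval the inner CDF is already `1` while the outer
one is not, and just left of the inner interval the inner CDF is still `0` while the outer one
is not: the two CDFs cross.
-/

open MeasureTheory

section AffineCDF

variable {Ω : Type*} [MeasurableSpace Ω] {P : Measure Ω} {ξ : Ω → ℝ} {A c s a : ℝ}

lemma measure_affine_le_eq_zero (hsupp : ∀ᵐ ω ∂P, |ξ ω| ≤ A) (hs : 0 ≤ s)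
    (ha : a < c - s * A) : P {ω | c + s * ξ ω ≤ a} = 0 := by
  rw [measure_eq_zero_iff_ae_notMem]
  filter_upwards [hsupp] with ω hω
  have : -A ≤ ξ ω := neg_le_of_abs_le hω
  simp only [not_le]
  nlinarith

lemma measure_affine_le_eq_one [IsProbabilityMeasure P] (hsupp : ∀ᵐ ω ∂P, |ξ ω| ≤ A)
    (hs : 0 ≤ s) (ha : c + s * A ≤ a) : P {ω | c + s * ξ ω ≤ a} = 1 := by
  have hae : ∀ᵐ ω ∂P, c + s * ξ ω ≤ a := by
    filter_upwards [hsupp] with ω hω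
    have : ξ ω ≤ A := le_of_abs_le hω
    nlinarith
  have : {ω | c + s * ξ ω ≤ a} =ᵐ[P] Set.univ := ae_eq_univ.2 (ae_iff.1 hae)
  rw [measure_congr this, measure_univ]

lemma measure_affine_le_pos_and_lt_one
    (hcdf : ∀ a ∈ Set.Ioo (-A) A, 0 < P {ω | ξ ω ≤ a} ∧ P {ω | ξ ω ≤ a} < 1)
    (hs : 0 < s) (ha : a ∈ Set.Ioo (c - s * A) (c + s * A)) :
    0 < P {ω | c + s * ξ ω ≤ a} ∧ P {ω | c + s * ξ ω ≤ a} < 1 := by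
  have hset : {ω | c + s * ξ ω ≤ a} = {ω | ξ ω ≤ (a - c) / s} := by
    ext ω
    simp only [Set.mem_ofPred_eq, le_div_iff₀ hs]
    constructor <;> intro h <;> linarith
  have hmem : (a - c) / s ∈ Set.Ioo (-A) A := by
    constructor
    · rw [lt_div_iff₀ hs]; linarith [ha.1]
    · rw [div_lt_iff₀ hs]; linarith [ha.2]
  rw [hset]
  exact hcdf _ hmem

lemma exists_affine_cdf_crossing [IsProbabilityMeasure P] (hA : 0 ≤ A)
    (hsupp : ∀ᵐ ω ∂P, |ξ ω| ≤ A)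
    (hcdf : ∀ a ∈ Set.Ioo (-A) A, 0 < P {ω | ξ ω ≤ a} ∧ P {ω | ξ ω ≤ a} < 1)
    {c' s' : ℝ} (hs : 0 < s) (hs' : 0 ≤ s')
    (hleft : c - s * A < c' - s' * A) (hright : c' + s' * A < c + s * A) :
    ∃ a b : ℝ, P {ω | c + s * ξ ω ≤ a} < P {ω | c' + s' * ξ ω ≤ a} ∧
      P {ω | c' + s' * ξ ω ≤ b} < P {ω | c + s * ξ ω ≤ b} := by
  have hs'A : 0 ≤ s' * A := mul_nonneg hs' hA
  refine ⟨c' + s' * A, (c - s * A + (c' - s' * A)) / 2, ?_, ?_⟩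
  · rw [measure_affine_le_eq_one hsupp hs' le_rfl]
    exact (measure_affine_le_pos_and_lt_one hcdf hs ⟨by linarith, hright⟩).2
  · rw [measure_affine_le_eq_zero hsupp hs' (by linarith)]
    exact (measure_affine_le_pos_and_lt_one hcdf hs ⟨by linarith, by linarith⟩).1

end AffineCDF

theorem stmt_13 {Ω : Type*} [MeasurableSpace Ω] (P : Measure Ω) [IsProbabilityMeasure P]
    (A : ℝ) (hA : 0 < A) (z zbar : ℝ) (hz : z < zbar)
    (σ : ℝ → ℝ) (hσpos : ∀ x : ℝ, 0 < σ x)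
    (hnl : (zbar - z) / A < |σ zbar - σ z|)
    (ξ : Ω → ℝ) (hξ : Measurable ξ)
    (hsupp : P {ω | |ξ ω| ≤ A} = 1)
    (hcdf : ∀ a ∈ Set.Ioo (-A) A, 0 < P {ω | ξ ω ≤ a} ∧ P {ω | ξ ω ≤ a} < 1) :
    ∃ astar alow : ℝ,
      P {ω | zbar + σ zbar * ξ ω ≤ astar} < P {ω | z + σ z * ξ ω ≤ astar} ∧
      P {ω | z + σ z * ξ ω ≤ alow} < P {ω | zbar + σ zbar * ξ ω ≤ alow} := by
  have hae : ∀ᵐ ω ∂P, |ξ ω| ≤ A :=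
    (mem_ae_iff_prob_eq_one (measurableSet_le hξ.abs measurable_const)).2 hsupp
  rcases lt_abs.1 hnl with h | h <;> rw [div_lt_iff₀ hA] at h
  · obtain ⟨a, b, hab⟩ := exists_affine_cdf_crossing (c := zbar) (c' := z) hA.le hae hcdf
      (hσpos zbar) (hσpos z).le (by linarith) (by linarith)
    exact ⟨a, b, hab⟩
  · obtain ⟨a, b, hab, hba⟩ := exists_affine_cdf_crossing (c := z) (c' := zbar) hA.le hae hcdf
      (hσpos z) (hσpos zbar).le (by linarith) (by linarith)
    exact ⟨b, a, hba, hab⟩
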